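/- For any nonnegative random variables S and I with I > 0 almost surely, E[log(1 + S/I)] = ∫₀^∞ (1/γ)·(E[e^{−γI}] − E[e^{−γ(I+S)}]) dγ, provided the relevant expectations are finite. In particular, if S and I are independent, E[log(1 + S/I)] = ∫₀^∞ (1/γ)·E[e^{−γI}]·(1 − E[e^{−γS}]) dγ. -/

import Mathlib

/-!
For `0 < a ≤ b`, Frullani's integral gives `log (b / a) = ∫₀^∞ (e^{-γa} - e^{-γb}) / γ dγ`, the
integrand being nonnegative and integrable since `e^{-γa} - e^{-γb} ≤ γ (b - a) e^{-γa}`.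
Taking `a = I`, `b = I + S` and exchanging the expectation with the `dγ`-integral by Tonelli
gives the first identity. Under independence the Laplace transform of `I + S` factors as
`E[e^{-γI}] E[e^{-γS}]`.
-/

open MeasureTheory ProbabilityTheory Real Set

lemma exp_neg_mul_sub_exp_neg_mul_le (γ a b : ℝ) :
    exp (-(γ * a)) - exp (-(γ * b)) ≤ γ * (b - a) * exp (-(γ * a)) := by
  have h := add_one_le_exp (-(γ * (b - a)))
  have hsplit : exp (-(γ * b)) = exp (-(γ * a)) * exp (-(γ * (b - a))) := by
    rw [← exp_add]; ring_nf
  rw [hsplit]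
  nlinarith [exp_pos (-(γ * a))]

lemma inv_mul_exp_sub_exp_nonneg {γ a b : ℝ} (hγ : 0 ≤ γ) (hab : a ≤ b) :
    0 ≤ γ⁻¹ * (exp (-(γ * a)) - exp (-(γ * b))) :=
  mul_nonneg (inv_nonneg.mpr hγ) (sub_nonneg.mpr (exp_le_exp.mpr (by nlinarith)))

lemma integrableOn_Ioi_inv_mul_exp_sub_exp {a b : ℝ} (ha : 0 < a) (hab : a ≤ b) :
    IntegrableOn (fun γ => γ⁻¹ * (exp (-(γ * a)) - exp (-(γ * b)))) (Ioi 0) := by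
  refine Integrable.mono' ((exp_neg_integrableOn_Ioi 0 ha).const_mul (b - a)) (by fun_prop) ?_
  filter_upwards [ae_restrict_mem measurableSet_Ioi] with γ (hγ : 0 < γ)
  have hle := exp_neg_mul_sub_exp_neg_mul_le γ a b
  rw [Real.norm_eq_abs, abs_of_nonneg (inv_mul_exp_sub_exp_nonneg hγ.le hab),
    inv_mul_le_iff₀ hγ, neg_mul, mul_comm a]
  linarith

lemma integral_Ioi_inv_mul_exp_sub_exp {a b : ℝ} (ha : 0 < a) (hab : a ≤ b) :
    ∫ γ in Ioi 0, γ⁻¹ * (exp (-(γ * a)) - exp (-(γ * b))) = log (b / a) := by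
  have hexp : Continuous fun x : ℝ => exp (-x) := by fun_prop
  have := Frullani.integral_Ioi_eq (f := fun x => exp (-x)) (L := 1) (R := 0)
    (hexp.locallyIntegrable.locallyIntegrableOn _) ha (ha.trans_le hab)
    (by simpa using (hexp.tendsto 0).mono_left nhdsWithin_le_nhds)
    (by simpa using tendsto_exp_neg_atTop_nhds_zero)
    (by simpa only [smul_eq_mul, mul_comm a, mul_comm b] using
      integrableOn_Ioi_inv_mul_exp_sub_exp ha hab)
  simpa only [smul_eq_mul, mul_comm a, mul_comm b, sub_zero, mul_one] using this

lemma lintegral_Ioi_inv_mul_exp_sub_exp {a b : ℝ} (ha : 0 < a) (hab : a ≤ b) :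
    ∫⁻ γ in Ioi 0, ENNReal.ofReal (γ⁻¹ * (exp (-(γ * a)) - exp (-(γ * b)))) =
      ENNReal.ofReal (log (b / a)) := by
  rw [← integral_Ioi_inv_mul_exp_sub_exp ha hab, ofReal_integral_eq_lintegral_ofReal
    (integrableOn_Ioi_inv_mul_exp_sub_exp ha hab)]
  filter_upwards [ae_restrict_mem measurableSet_Ioi] with γ (hγ : 0 < γ)
  exact inv_mul_exp_sub_exp_nonneg hγ.le hab

section Laplace

variable {Ω : Type*} [MeasurableSpace Ω] {μ : Measure Ω} {X Y : Ω → ℝ}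

lemma integrable_exp_neg_mul_of_nonneg [IsFiniteMeasure μ] (hX : AEMeasurable X μ) {γ : ℝ}
    (hγ : 0 ≤ γ) (hX₀ : ∀ᵐ ω ∂μ, 0 ≤ X ω) : Integrable (fun ω => exp (-(γ * X ω))) μ := by
  refine Integrable.mono' (integrable_const 1) (by fun_prop) ?_
  filter_upwards [hX₀] with ω h
  rw [Real.norm_eq_abs, abs_of_pos (exp_pos _), exp_le_one_iff, neg_nonpos]
  positivity

theorem lintegral_ofReal_log_div_eq_lintegral_Ioi [SFinite μ] (hX : AEMeasurable X μ)
    (hY : AEMeasurable Y μ) (hX₀ : ∀ᵐ ω ∂μ, 0 < X ω) (hXY : ∀ᵐ ω ∂μ, X ω ≤ Y ω) :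
    ∫⁻ ω, ENNReal.ofReal (log (Y ω / X ω)) ∂μ =
      ∫⁻ γ in Ioi 0, ∫⁻ ω, ENNReal.ofReal (γ⁻¹ * (exp (-(γ * X ω)) - exp (-(γ * Y ω)))) ∂μ := by
  calc ∫⁻ ω, ENNReal.ofReal (log (Y ω / X ω)) ∂μ
      = ∫⁻ ω, (∫⁻ γ in Ioi 0,
          ENNReal.ofReal (γ⁻¹ * (exp (-(γ * X ω)) - exp (-(γ * Y ω))))) ∂μ := by
        refine lintegral_congr_ae ?_
        filter_upwards [hX₀, hXY] with ω h₀ h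
        exact (lintegral_Ioi_inv_mul_exp_sub_exp h₀ h).symm
    _ = _ := lintegral_lintegral_swap (by fun_prop)

theorem integral_log_div_eq_integral_Ioi [IsFiniteMeasure μ] (hX : AEMeasurable X μ)
    (hY : AEMeasurable Y μ) (hX₀ : ∀ᵐ ω ∂μ, 0 < X ω) (hXY : ∀ᵐ ω ∂μ, X ω ≤ Y ω) :
    ∫ ω, log (Y ω / X ω) ∂μ =
      ∫ γ in Ioi 0, γ⁻¹ * (∫ ω, exp (-(γ * X ω)) ∂μ - ∫ ω, exp (-(γ * Y ω)) ∂μ) := by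
  have hY₀ : ∀ᵐ ω ∂μ, 0 ≤ Y ω := by filter_upwards [hX₀, hXY] with ω h₀ h using h₀.le.trans h
  have hXi {γ : ℝ} (hγ : 0 < γ) :=
    integrable_exp_neg_mul_of_nonneg hX hγ.le (hX₀.mono fun _ h => h.le)
  have hYi {γ : ℝ} (hγ : 0 < γ) := integrable_exp_neg_mul_of_nonneg hY hγ.le hY₀
  have hInner : ∀ γ ∈ Ioi (0 : ℝ),
      ∫⁻ ω, ENNReal.ofReal (γ⁻¹ * (exp (-(γ * X ω)) - exp (-(γ * Y ω)))) ∂μ =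
        ENNReal.ofReal (γ⁻¹ * (∫ ω, exp (-(γ * X ω)) ∂μ - ∫ ω, exp (-(γ * Y ω)) ∂μ)) := by
    intro γ (hγ : 0 < γ)
    rw [← integral_sub (hXi hγ) (hYi hγ), ← integral_const_mul]
    refine (ofReal_integral_eq_lintegral_ofReal (((hXi hγ).sub (hYi hγ)).const_mul _) ?_).symm
    filter_upwards [hXY] with ω h using inv_mul_exp_sub_exp_nonneg hγ.le h
  have hLaplace_anti : ∀ γ ∈ Ioi (0 : ℝ),
      ∫ ω, exp (-(γ * Y ω)) ∂μ ≤ ∫ ω, exp (-(γ * X ω)) ∂μ := by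
    intro γ (hγ : 0 < γ)
    refine integral_mono_ae (hYi hγ) (hXi hγ) ?_
    filter_upwards [hXY] with ω h
    exact exp_le_exp.mpr (by nlinarith)
  have hLaplaceX : AEStronglyMeasurable (fun γ => ∫ ω, exp (-(γ * X ω)) ∂μ)
      (volume.restrict (Ioi 0)) :=
    AEStronglyMeasurable.integral_prod_right' (f := fun p : ℝ × Ω => exp (-(p.1 * X p.2)))
      (by have := hX.comp_snd (μ := volume.restrict (Ioi (0 : ℝ))); fun_prop)
  have hLaplaceY : AEStronglyMeasurable (fun γ => ∫ ω, exp (-(γ * Y ω)) ∂μ)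
      (volume.restrict (Ioi 0)) :=
    AEStronglyMeasurable.integral_prod_right' (f := fun p : ℝ × Ω => exp (-(p.1 * Y p.2)))
      (by have := hY.comp_snd (μ := volume.restrict (Ioi (0 : ℝ))); fun_prop)
  -- Both integrands are nonnegative with equal lintegrals; if these are infinite, both
  -- Bochner integrals are `0`.
  rw [integral_eq_lintegral_of_nonneg_ae, integral_eq_lintegral_of_nonneg_ae,
    lintegral_ofReal_log_div_eq_lintegral_Ioi hX hY hX₀ hXY,
    setLIntegral_congr_fun measurableSet_Ioi hInner]
  · filter_upwards [ae_restrict_mem measurableSet_Ioi] with γ (hγ : 0 < γ)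
    exact mul_nonneg (inv_nonneg.mpr hγ.le) (sub_nonneg.mpr (hLaplace_anti γ hγ))
  · exact measurable_inv.aestronglyMeasurable.mul (hLaplaceX.sub hLaplaceY)
  · filter_upwards [hX₀, hXY] with ω h₀ h
    exact log_nonneg ((one_le_div h₀).mpr h)
  · exact (hY.div hX).log.aestronglyMeasurable

lemma ProbabilityTheory.IndepFun.integral_exp_neg_mul_add (h : IndepFun X Y μ)
    (hX : AEMeasurable X μ) (hY : AEMeasurable Y μ) (γ : ℝ) :
    ∫ ω, exp (-(γ * (X ω + Y ω))) ∂μ =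
      (∫ ω, exp (-(γ * X ω)) ∂μ) * ∫ ω, exp (-(γ * Y ω)) ∂μ := by
  simpa only [mgf, Pi.add_apply, neg_mul] using
    h.mgf_add' (t := -γ) hX.aestronglyMeasurable hY.aestronglyMeasurable

end Laplace

theorem stmt_7_general
    {Ω : Type*} [MeasurableSpace Ω] (P : Measure Ω) [IsProbabilityMeasure P]
    (S I : Ω → ℝ) (hSmeas : Measurable S) (hImeas : Measurable I)
    (hS : ∀ᵐ ω ∂P, 0 ≤ S ω) (hI : ∀ᵐ ω ∂P, 0 < I ω) :
    (∫ ω, Real.log (1 + S ω / I ω) ∂P =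
      ∫ γ in Set.Ioi (0:ℝ), (1 / γ) *
        ((∫ ω, Real.exp (-(γ * I ω)) ∂P) - ∫ ω, Real.exp (-(γ * (I ω + S ω))) ∂P)) ∧
    (IndepFun S I P →
      ∫ ω, Real.log (1 + S ω / I ω) ∂P =
        ∫ γ in Set.Ioi (0:ℝ), (1 / γ) *
          ((∫ ω, Real.exp (-(γ * I ω)) ∂P) * (1 - ∫ ω, Real.exp (-(γ * S ω)) ∂P))) := by
  have hlog : (fun ω => log (1 + S ω / I ω)) =ᵐ[P] fun ω => log ((I ω + S ω) / I ω) := by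
    filter_upwards [hI] with ω h
    rw [add_div, div_self h.ne']
  have hmain : ∫ ω, log (1 + S ω / I ω) ∂P = ∫ γ in Ioi 0, (1 / γ) *
      ((∫ ω, exp (-(γ * I ω)) ∂P) - ∫ ω, exp (-(γ * (I ω + S ω))) ∂P) := by
    rw [integral_congr_ae hlog, integral_log_div_eq_integral_Ioi (Y := fun ω => I ω + S ω)
      hImeas.aemeasurable (by fun_prop) hI (by filter_upwards [hS] with ω h; linarith)]
    simp only [one_div]
  refine ⟨hmain, fun hind => hmain.trans (setIntegral_congr_fun measurableSet_Ioi fun γ _ => ?_)⟩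
  rw [hind.symm.integral_exp_neg_mul_add hImeas.aemeasurable hSmeas.aemeasurable]
  ring

/-- For nonnegative random variables `S` and `I` with `I > 0` almost surely and
all relevant expectations finite,
`E[log (1 + S/I)] = ∫₀^∞ (1/γ) (E[e^{-γI}] - E[e^{-γ(I+S)}]) dγ`; if moreover `S` and `I`
are independent, this equals `∫₀^∞ (1/γ) E[e^{-γI}] (1 - E[e^{-γS}]) dγ`. -/
theorem stmt_7
    {Ω : Type*} [MeasurableSpace Ω] (P : Measure Ω) [IsProbabilityMeasure P]
    (S I : Ω → ℝ) (hSmeas : Measurable S) (hImeas : Measurable I)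
    (hS : ∀ᵐ ω ∂P, 0 ≤ S ω) (hI : ∀ᵐ ω ∂P, 0 < I ω)
    (hint : Integrable (fun ω => Real.log (1 + S ω / I ω)) P) :
    (∫ ω, Real.log (1 + S ω / I ω) ∂P =
      ∫ γ in Set.Ioi (0:ℝ), (1 / γ) *
        ((∫ ω, Real.exp (-(γ * I ω)) ∂P) - ∫ ω, Real.exp (-(γ * (I ω + S ω))) ∂P)) ∧
    (IndepFun S I P →
      ∫ ω, Real.log (1 + S ω / I ω) ∂P =
        ∫ γ in Set.Ioi (0:ℝ), (1 / γ) *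
          ((∫ ω, Real.exp (-(γ * I ω)) ∂P) * (1 - ∫ ω, Real.exp (-(γ * S ω)) ∂P))) :=
  stmt_7_general P S I hSmeas hImeas hS hI
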